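/- Let A be a finitely-ambiguous NFA, S ⊆ Δ a support, and let w = x0 y1 x1 ⋯ yℓ xℓ be a bad word for S with exactly M accepting runs in A_S. Then for every tuple (j_1, …, j_ℓ) ∈ ℕ^ℓ, the word x0 y1^{j_1} x1 y2^{j_2} ⋯ yℓ^{j_ℓ} xℓ also has exactly M accepting runs in A_S. -/
import Mathlib


open scoped BigOperators

/-- A nondeterministic finite automaton over alphabet `σ` with states `Q`:
an initial state, a finite set of transitions and a finite set of accepting states. -/
structure NFA' (σ Q : Type) where
  init : Q
  trans : Finset (Q × σ × Q)
  accept : Finset Q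

namespace NFA'

variable {σ Q : Type}

/-- `IsRun Δ p w ts r`: `ts` is a run on the word `w` from state `p` to state `r`,
using transitions from `Δ`. -/
inductive IsRun (Δ : Finset (Q × σ × Q)) : Q → List σ → List (Q × σ × Q) → Q → Prop
  | nil (q : Q) : IsRun Δ q [] [] q
  | cons {p : Q} {a : σ} {q r : Q} {w : List σ} {ts : List (Q × σ × Q)} :
      (p, a, q) ∈ Δ → IsRun Δ q w ts r → IsRun Δ p (a :: w) ((p, a, q) :: ts) r

/-- `ts` is an accepting run of `A` on `w`. -/
def AccRun (A : NFA' σ Q) (w : List σ) (ts : List (Q × σ × Q)) : Prop :=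
  ∃ r ∈ A.accept, IsRun A.trans A.init w ts r

/-- The language of `A`: words admitting an accepting run. -/
def lang (A : NFA' σ Q) : Set (List σ) := {w | ∃ ts, A.AccRun w ts}

/-- `δ(q, u)`: the set of states reachable from `q` by a run on `u`. -/
def reach (A : NFA' σ Q) (q : Q) (u : List σ) : Set Q :=
  {r | ∃ ts, IsRun A.trans q u ts r}

/-- The word `u` admits an accepting run from the state `q`. -/
def AccFrom (A : NFA' σ Q) (q : Q) (u : List σ) : Prop :=
  ∃ r ∈ A.accept, ∃ ts, IsRun A.trans q u ts r

/-- `A_S`: the automaton `A` with transitions restricted to `S`. -/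
def restrict (A : NFA' σ Q) (S : Finset (Q × σ × Q)) : NFA' σ Q :=
  { A with trans := S }

/-- `A` is `k`-ambiguous: every word has at most `k` accepting runs. -/
def kAmbiguous (A : NFA' σ Q) (k : ℕ) : Prop :=
  ∀ w, {ts | A.AccRun w ts}.encard ≤ (k : ℕ∞)

/-- `A` is finitely-ambiguous. -/
def FinitelyAmbiguous (A : NFA' σ Q) : Prop := ∃ k : ℕ, 0 < k ∧ A.kAmbiguous k

/-- A memoryless stochastic resolver for `A`: probabilities, supported on the transitions
of `A`, summing to one over the outgoing transitions of every pair `(p, a)` that has at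
least one outgoing transition (implicitly, `A` is completed with a non-accepting sink). -/
structure Resolver (A : NFA' σ Q) where
  r : Q × σ × Q → ℝ
  nonneg : ∀ t, 0 ≤ r t
  le_one : ∀ t, r t ≤ 1
  supp : ∀ t, r t ≠ 0 → t ∈ A.trans
  sum_one : ∀ p a, (∃ q, (p, a, q) ∈ A.trans) →
      ∑ t ∈ A.trans, {t : Q × σ × Q | t.1 = p ∧ t.2.1 = a}.indicator r t = 1

/-- The probability of a run: the product of the probabilities of its transitions. -/
def runProb (f : Q × σ × Q → ℝ) (ts : List (Q × σ × Q)) : ℝ := (ts.map f).prod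

/-- The acceptance probability of a word: the sum, over all accepting runs, of the
product of the transition probabilities along the run. -/
noncomputable def accProb (A : NFA' σ Q) (f : Q × σ × Q → ℝ) (w : List σ) : ℝ :=
  ∑ᶠ ts ∈ {ts | A.AccRun w ts}, runProb f ts

/-- `A` is `λ`-memoryless-stochastically-resolvable. -/
def Resolvable (A : NFA' σ Q) (lam : ℝ) : Prop :=
  ∃ R : A.Resolver, {w | lam ≤ A.accProb R.r w} = A.lang

/-- `A` is positively (memoryless stochastically) resolvable. -/
def PositivelyResolvable (A : NFA' σ Q) : Prop :=
  ∃ lam : ℝ, 0 < lam ∧ A.Resolvable lam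

/-- The support `S` is bad: no resolver whose support is exactly `S` witnesses
positive resolvability. -/
def BadSupport (A : NFA' σ Q) (S : Finset (Q × σ × Q)) : Prop :=
  ∀ R : A.Resolver, (∀ t, R.r t ≠ 0 ↔ t ∈ S) →
    ∀ lam : ℝ, 0 < lam → {w | lam ≤ A.accProb R.r w} ≠ A.lang

/-- A transition is nondeterministic in `S`. -/
def NondetIn (S : Finset (Q × σ × Q)) (t : Q × σ × Q) : Prop :=
  t ∈ S ∧ ∃ q', q' ≠ t.2.2 ∧ (t.1, t.2.1, q') ∈ S

/-- The number of transitions of a run that are nondeterministic in `S`. -/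
noncomputable def nondetCount (S : Finset (Q × σ × Q)) (ts : List (Q × σ × Q)) : ℕ :=
  (ts.map (Set.indicator {t | NondetIn S t} (fun _ => 1))).sum

/-- `b(w)`: the minimal number of `S`-nondeterministic transitions over all accepting
runs of `w` in `A_S`. -/
noncomputable def minNondet (A : NFA' σ Q) (S : Finset (Q × σ × Q)) (w : List σ) : ℕ :=
  sInf {m | ∃ ts, (A.restrict S).AccRun w ts ∧ nondetCount S ts = m}

/-- The state of a run `ts` (started in `q0`) after `n` transitions. -/
def stateAt (q0 : Q) (ts : List (Q × σ × Q)) (n : ℕ) : Q :=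
  match (ts.take n).getLast? with
  | some t => t.2.2
  | none => q0

/-- `Θ` makes `A` into a probabilistic finite automaton (PFA) based on `A`. -/
def IsPFA (A : NFA' σ Q) (Θ : Q × σ × Q → ℝ) : Prop :=
  (∀ t ∈ A.trans, 0 < Θ t ∧ Θ t ≤ 1) ∧ (∀ t, t ∉ A.trans → Θ t = 0) ∧
  ∀ p a, (∃ q, (p, a, q) ∈ A.trans) →
    ∑ t ∈ A.trans, {t : Q × σ × Q | t.1 = p ∧ t.2.1 = a}.indicator Θ t = 1

/-- The PFA is simple: every transition has probability `1/2` or `1`. -/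
def IsSimple (A : NFA' σ Q) (Θ : Q × σ × Q → ℝ) : Prop :=
  ∀ t ∈ A.trans, Θ t = 1/2 ∨ Θ t = 1

end NFA'

open NFA'

/-- `y^j`: the word `y` repeated `j` times. -/
def repWord {σ : Type} (j : ℕ) (u : List σ) : List σ := (List.replicate j u).flatten

/-- The word `x₀ y₁^{j₁} x₁ y₂^{j₂} ⋯ y_ℓ^{j_ℓ} x_ℓ`. -/
def pumpedWord {σ : Type} (x y : ℕ → List σ) (j : ℕ → ℕ) (l : ℕ) : List σ :=
  x 0 ++ ((List.range l).map (fun t => repWord (j (t + 1)) (y (t + 1)) ++ x (t + 1))).flatten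

/-- The prefix `x₀ y₁ x₁ ⋯ y_m x_m`. -/
def prefCat {σ : Type} (x y : ℕ → List σ) (m : ℕ) : List σ :=
  x 0 ++ ((List.range m).map (fun t => y (t + 1) ++ x (t + 1))).flatten

/-- The suffix `y_i x_i y_{i+1} x_{i+1} ⋯ y_ℓ x_ℓ`. -/
def sufCat {σ : Type} (x y : ℕ → List σ) (l i : ℕ) : List σ :=
  ((List.range (l + 1 - i)).map (fun t => y (i + t) ++ x (i + t))).flatten

/-- The conditions (1)-(4) for `w = x₀ y₁ x₁ ⋯ y_ℓ x_ℓ` to be a bad word for the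
support `S`, with respect to the data `Qs i`, `Rs i`, `qs i` (for `1 ≤ i ≤ ℓ`). -/
def BadWordDecomp {σ Q : Type} (A : NFA' σ Q) (S : Finset (Q × σ × Q)) (l : ℕ)
    (x y : ℕ → List σ) (Qs Rs : ℕ → Set Q) (qs : ℕ → Q) : Prop :=
  (∀ i, 1 ≤ i → i ≤ l → y i ≠ []) ∧
  (∀ i, 1 ≤ i → i ≤ l → qs i ∈ Qs i) ∧
  -- (1)
  (∀ i, 1 ≤ i → i ≤ l →
    Qs i = {q | q ∈ (A.restrict S).reach A.init (prefCat x y (i - 1)) ∧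
      (A.restrict S).AccFrom q (sufCat x y l i)}) ∧
  -- (2)
  (∀ ts, (A.restrict S).AccRun (pumpedWord x y (fun _ => 1) l) ts →
    ∃ i, 1 ≤ i ∧ i ≤ l ∧
      stateAt A.init ts (prefCat x y (i - 1) ++ y i).length = qs i) ∧
  -- (3)
  (∀ i, 1 ≤ i → i ≤ l → ∀ q ∈ Qs i,
    ∀ ts, (A.restrict S).AccRun (pumpedWord x y (fun _ => 1) l) ts →
      stateAt A.init ts (prefCat x y (i - 1)).length = q →
      (stateAt A.init ts (prefCat x y (i - 1) ++ y i).length = q ∧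
        (q = qs i →
          ∃ t ∈ (ts.drop (prefCat x y (i - 1)).length).take (y i).length,
            NondetIn S t))) ∧
  -- (4)
  (∀ i, 1 ≤ i → i ≤ l →
    Rs i = {q | q ∈ (A.restrict S).reach A.init (prefCat x y (i - 1)) ∧
      ¬ (A.restrict S).AccFrom q (sufCat x y l i)} ∧
    Rs i = {q | q ∈ (A.restrict S).reach A.init (prefCat x y (i - 1) ++ y i) ∧
      ¬ (A.restrict S).AccFrom q (x i ++ sufCat x y l (i + 1))})

/-- `w` is a bad word for the support `S` of `A`. -/
def IsBadWord {σ Q : Type} (A : NFA' σ Q) (S : Finset (Q × σ × Q))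
    (w : List σ) : Prop :=
  ∃ (M l : ℕ) (x y : ℕ → List σ) (Qs Rs : ℕ → Set Q) (qs : ℕ → Q),
    w = pumpedWord x y (fun _ => 1) l ∧
    {ts | (A.restrict S).AccRun w ts}.encard = (M : ℕ∞) ∧
    l ≤ M ∧
    BadWordDecomp A S l x y Qs Rs qs


namespace NFA'
variable {σ Q : Type}

lemma IsRun.length_eq {Δ : Finset (Q × σ × Q)} {p : Q} {w : List σ} {ts : List (Q × σ × Q)} {r : Q}
    (h : IsRun Δ p w ts r) : ts.length = w.length := by
  induction h with
  | nil => rfl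
  | cons h _ ih => simp [ih]

lemma IsRun.append_run {Δ : Finset (Q × σ × Q)} {p q r : Q} {u v : List σ}
    {s t : List (Q × σ × Q)}
    (h1 : IsRun Δ p u s q) (h2 : IsRun Δ q v t r) : IsRun Δ p (u ++ v) (s ++ t) r := by
  induction h1 with
  | nil => simpa using h2
  | cons h _ ih => exact .cons h (ih h2)

lemma IsRun.split_run {Δ : Finset (Q × σ × Q)} {p r : Q} {u v : List σ} {ts : List (Q × σ × Q)}
    (h : IsRun Δ p (u ++ v) ts r) :
    ∃ s t q, ts = s ++ t ∧ IsRun Δ p u s q ∧ IsRun Δ q v t r := by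
  induction u generalizing p ts with
  | nil => exact ⟨[], ts, p, rfl, .nil p, by simpa using h⟩
  | cons a u ih =>
    rw [List.cons_append] at h
    cases h with
    | cons hmem h' =>
      obtain ⟨s, t, q, rfl, h1, h2⟩ := ih h'
      exact ⟨_ :: s, t, q, rfl, .cons hmem h1, h2⟩

lemma IsRun.nil_inv {Δ : Finset (Q × σ × Q)} {p r : Q} {ts : List (Q × σ × Q)}
    (h : IsRun Δ p [] ts r) : ts = [] ∧ p = r := by
  cases h; exact ⟨rfl, rfl⟩

/-- the end state of a run `ts` started at `p` -/
def endOf (p : Q) (ts : List (Q × σ × Q)) : Q :=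
  match ts.getLast? with
  | some t => t.2.2
  | none => p

lemma endOf_eq {Δ : Finset (Q × σ × Q)} {p : Q} {w : List σ} {ts : List (Q × σ × Q)} {r : Q}
    (h : IsRun Δ p w ts r) : endOf p ts = r := by
  induction h with
  | nil => rfl
  | @cons p a q r w ts hmem h ih =>
    cases h with
    | nil => rfl
    | cons hmem' h' =>
      rw [← ih]
      rfl

lemma IsRun.end_unique {Δ : Finset (Q × σ × Q)} {p : Q} {w w' : List σ}
    {ts : List (Q × σ × Q)} {r r' : Q}
    (h : IsRun Δ p w ts r) (h' : IsRun Δ p w' ts r') : r = r' := by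
  rw [← endOf_eq h, ← endOf_eq h']

lemma stateAt_eq_endOf (q0 : Q) (ts : List (Q × σ × Q)) (n : ℕ) :
    stateAt q0 ts n = endOf q0 (ts.take n) := rfl

lemma stateAt_append (q0 : Q) (s t : List (Q × σ × Q)) :
    stateAt q0 (s ++ t) s.length = endOf q0 s := by
  rw [stateAt_eq_endOf, List.take_left]

end NFA'

namespace NFA'
variable {σ Q : Type}

/-- concatenation `g i ++ g (i+1) ++ ⋯ ++ g (i+k-1)` -/
def chain {α : Type} (g : ℕ → List α) (i k : ℕ) : List α :=
  ((List.range k).map (fun t => g (i + t))).flatten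

lemma chain_zero {α : Type} (g : ℕ → List α) (i : ℕ) : chain g i 0 = [] := rfl

lemma chain_succ {α : Type} (g : ℕ → List α) (i k : ℕ) :
    chain g i (k + 1) = g i ++ chain g (i + 1) k := by
  rw [chain, List.range_succ_eq_map, List.map_cons, List.flatten_cons, List.map_map, chain,
    add_zero]
  congr 1
  congr 1
  apply List.map_congr_left
  intro t _
  simp only [Function.comp_apply, Nat.succ_eq_add_one]
  congr 1
  omega

lemma chain_snoc {α : Type} (g : ℕ → List α) (i k : ℕ) :
    chain g i (k + 1) = chain g i k ++ g (i + k) := by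
  rw [chain, List.range_succ, List.map_append, List.flatten_append, chain]
  simp

lemma chain_congr {α : Type} {g1 g2 : ℕ → List α} {i k : ℕ}
    (h : ∀ m, i ≤ m → m < i + k → g1 m = g2 m) : chain g1 i k = chain g2 i k := by
  rw [chain, chain]
  congr 1
  apply List.map_congr_left
  intro t ht
  rw [List.mem_range] at ht
  exact h _ (by omega) (by omega)

lemma chain_add {α : Type} (g : ℕ → List α) (i a b : ℕ) :
    chain g i (a + b) = chain g i a ++ chain g (i + a) b := by
  induction b with
  | zero => simp [chain_zero]
  | succ b ih =>
    rw [show a + (b+1) = (a+b)+1 by omega, chain_snoc, ih, chain_snoc,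
      List.append_assoc, show i + (a + b) = i + a + b by omega]

lemma chain_inj {α : Type} {g1 g2 : ℕ → List α} :
    ∀ (k i : ℕ), chain g1 i k = chain g2 i k →
      (∀ m, i ≤ m → m < i + k → (g1 m).length = (g2 m).length) →
      ∀ m, i ≤ m → m < i + k → g1 m = g2 m := by
  intro k
  induction k with
  | zero => intro i _ _ m h1 h2; omega
  | succ k ih =>
    intro i heq hlen m h1 h2
    rw [chain_succ, chain_succ] at heq
    obtain ⟨hh, htail⟩ := List.append_inj heq (hlen i le_rfl (by omega))
    rcases Nat.eq_or_lt_of_le h1 with h | h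
    · exact h ▸ hh
    · exact ih (i+1) htail (fun m hm1 hm2 => hlen m (by omega) (by omega)) m h (by omega)

lemma repWord_zero (u : List σ) : repWord 0 u = [] := rfl

lemma repWord_succ (m : ℕ) (u : List σ) : repWord (m + 1) u = u ++ repWord m u := by
  simp [repWord, List.replicate_succ]

lemma repWord_one (u : List σ) : repWord 1 u = u := by simp [repWord]

/-- the pumped suffix `y_i^{j_i} x_i ⋯ y_l^{j_l} x_l` -/
def pumpedSuf (x y : ℕ → List σ) (j : ℕ → ℕ) (l i : ℕ) : List σ :=
  chain (fun m => repWord (j m) (y m) ++ x m) i (l + 1 - i)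

lemma pumpedWord_eq_chain (x y : ℕ → List σ) (j : ℕ → ℕ) (l : ℕ) :
    pumpedWord x y j l = x 0 ++ pumpedSuf x y j l 1 := by
  rw [pumpedWord, pumpedSuf, chain, show l + 1 - 1 = l by omega]
  congr 2
  apply List.map_congr_left
  intro t _
  rw [Nat.add_comm 1 t]

lemma sufCat_eq_chain (x y : ℕ → List σ) (l i : ℕ) :
    sufCat x y l i = chain (fun m => y m ++ x m) i (l + 1 - i) := rfl

lemma pumpedSuf_one (x y : ℕ → List σ) (l i : ℕ) :
    pumpedSuf x y (fun _ => 1) l i = sufCat x y l i := by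
  rw [pumpedSuf, sufCat_eq_chain]
  exact chain_congr (fun m _ _ => by rw [repWord_one])

lemma prefCat_eq_chain (x y : ℕ → List σ) (m : ℕ) :
    prefCat x y m = x 0 ++ chain (fun n => y n ++ x n) 1 m := by
  rw [prefCat, chain]
  congr 2
  apply List.map_congr_left
  intro t _
  rw [Nat.add_comm 1 t]

lemma prefCat_zero (x y : ℕ → List σ) : prefCat x y 0 = x 0 := by
  simp [prefCat_eq_chain, chain_zero]

lemma prefCat_succ (x y : ℕ → List σ) (m : ℕ) :
    prefCat x y (m + 1) = prefCat x y m ++ (y (m + 1) ++ x (m + 1)) := by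
  rw [prefCat_eq_chain, prefCat_eq_chain, chain_snoc, ← List.append_assoc]
  congr 1
  rw [Nat.add_comm 1 m]

lemma sufCat_top (x y : ℕ → List σ) (l : ℕ) : sufCat x y l (l + 1) = [] := by
  rw [sufCat_eq_chain, show l + 1 - (l+1) = 0 by omega, chain_zero]

lemma sufCat_step (x y : ℕ → List σ) {l i : ℕ} (hi : i ≤ l) :
    sufCat x y l i = y i ++ (x i ++ sufCat x y l (i + 1)) := by
  rw [sufCat_eq_chain, sufCat_eq_chain, show l + 1 - i = (l + 1 - (i+1)) + 1 by omega,
    chain_succ, List.append_assoc]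

lemma pumpedSuf_step (x y : ℕ → List σ) (j : ℕ → ℕ) {l i : ℕ} (hi : i ≤ l) :
    pumpedSuf x y j l i = repWord (j i) (y i) ++ (x i ++ pumpedSuf x y j l (i + 1)) := by
  rw [pumpedSuf, pumpedSuf, show l + 1 - i = (l + 1 - (i+1)) + 1 by omega,
    chain_succ, List.append_assoc]

lemma prefCat_sufCat (x y : ℕ → List σ) (l : ℕ) {m : ℕ} (hm : m ≤ l) :
    prefCat x y m ++ sufCat x y l (m + 1) = prefCat x y l := by
  rw [prefCat_eq_chain, prefCat_eq_chain, sufCat_eq_chain, List.append_assoc,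
    show l + 1 - (m + 1) = l - m by omega, show m + 1 = 1 + m by omega,
    ← chain_add, show m + (l - m) = l by omega]

lemma pumpedWord_one_pref (x y : ℕ → List σ) (l : ℕ) :
    pumpedWord x y (fun _ => 1) l = prefCat x y l := by
  rw [pumpedWord_eq_chain, pumpedSuf_one, ← prefCat_sufCat x y l (Nat.zero_le l),
    prefCat_zero]

lemma pumpedWord_one_split (x y : ℕ → List σ) (l : ℕ) {i : ℕ} (h1 : 1 ≤ i) (h2 : i ≤ l + 1) :
    pumpedWord x y (fun _ => 1) l = prefCat x y (i - 1) ++ sufCat x y l i := by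
  rw [pumpedWord_one_pref, ← prefCat_sufCat x y l (show i - 1 ≤ l by omega),
    show i - 1 + 1 = i by omega]

end NFA'

namespace NFA'
variable {σ Q : Type}

lemma IsRun.mono {S Δ : Finset (Q × σ × Q)} (hS : S ⊆ Δ) {p : Q} {w : List σ}
    {ts : List (Q × σ × Q)} {r : Q} (h : IsRun S p w ts r) : IsRun Δ p w ts r := by
  induction h with
  | nil => exact .nil _
  | cons hmem _ ih => exact .cons (hS hmem) ih

lemma loopRep {Δ : Finset (Q × σ × Q)} {q : Q} {u : List σ} {L : List (Q × σ × Q)}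
    (h : IsRun Δ q u L q) (n : ℕ) :
    IsRun Δ q (repWord n u) ((List.replicate n L).flatten) q := by
  induction n with
  | zero => exact .nil q
  | succ n ih =>
    rw [repWord_succ, List.replicate_succ, List.flatten_cons]
    exact h.append_run ih

lemma loops_chain_run {Δ : Finset (Q × σ × Q)} {q : Q} {yw : List σ}
    {f : ℕ → List (Q × σ × Q)} :
    ∀ (k i0 : ℕ), (∀ t, i0 ≤ t → t < i0 + k → IsRun Δ q yw (f t) q) →
    IsRun Δ q (repWord k yw) (chain f i0 k) q := by
  intro k
  induction k with
  | zero => intro i0 _; exact .nil q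
  | succ k ih =>
    intro i0 h
    rw [chain_succ, repWord_succ]
    exact (h i0 le_rfl (by omega)).append_run
      (ih (i0 + 1) (fun t h1 h2 => h t (by omega) (by omega)))

lemma build_run {Δ : Finset (Q × σ × Q)} (x y : ℕ → List σ) (j : ℕ → ℕ) (l : ℕ)
    (qf : ℕ → Q) (T L : ℕ → List (Q × σ × Q)) :
    ∀ (d i : ℕ), i + d = l + 1 →
    (∀ m, i ≤ m → m ≤ l →
      IsRun Δ (qf m) (y m) (L m) (qf m) ∧ IsRun Δ (qf m) (x m) (T m) (qf (m+1))) →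
    IsRun Δ (qf i) (pumpedSuf x y j l i)
      (chain (fun m => (List.replicate (j m) (L m)).flatten ++ T m) i (l + 1 - i))
      (qf (l + 1)) := by
  intro d
  induction d with
  | zero =>
    intro i hi _
    have hieq : i = l + 1 := by omega
    subst hieq
    rw [pumpedSuf, show l + 1 - (l + 1) = 0 by omega, chain_zero, chain_zero]
    exact .nil _
  | succ d ih =>
    intro i hi h
    have hil : i ≤ l := by omega
    rw [pumpedSuf_step x y j hil, show l + 1 - i = (l + 1 - (i+1)) + 1 by omega, chain_succ,
      List.append_assoc]
    have h1 := h i le_rfl hil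
    exact (loopRep h1.1 (j i)).append_run
      (h1.2.append_run (ih (i+1) (by omega) (fun m hm1 hm2 => h m (by omega) hm2)))

end NFA'

namespace NFA'

section LoopLemmas

variable {σ Q : Type} {A : NFA' σ Q} {S : Finset (Q × σ × Q)}
  {l : ℕ} {x y : ℕ → List σ}

/-- consequence of condition (3) -/
def Hyp3 (A : NFA' σ Q) (S : Finset (Q × σ × Q)) (l : ℕ) (x y : ℕ → List σ) : Prop :=
  ∀ i, 1 ≤ i → i ≤ l → ∀ q, (∃ Pts, IsRun S A.init (prefCat x y (i-1)) Pts q) →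
    (A.restrict S).AccFrom q (sufCat x y l i) →
    ∀ ts, (A.restrict S).AccRun (pumpedWord x y (fun _ => 1) l) ts →
      stateAt A.init ts (prefCat x y (i-1)).length = q →
      stateAt A.init ts (prefCat x y (i-1) ++ y i).length = q

lemma loop_close (H3 : Hyp3 A S l x y) {i : ℕ} (h1 : 1 ≤ i) (h2 : i ≤ l) {q q'' : Q}
    {Pts Ly : List (Q × σ × Q)}
    (hP : IsRun S A.init (prefCat x y (i-1)) Pts q)
    (hacc : (A.restrict S).AccFrom q (sufCat x y l i))
    (hLy : IsRun S q (y i) Ly q'')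
    (hacc'' : (A.restrict S).AccFrom q'' (x i ++ sufCat x y l (i+1))) : q'' = q := by
  obtain ⟨r, hr, Rts, hR⟩ := hacc''
  have hrun : IsRun S A.init (prefCat x y (i-1) ++ (y i ++ (x i ++ sufCat x y l (i+1))))
      (Pts ++ (Ly ++ Rts)) r := hP.append_run (hLy.append_run hR)
  have hword : prefCat x y (i-1) ++ (y i ++ (x i ++ sufCat x y l (i+1)))
      = pumpedWord x y (fun _ => 1) l := by
    rw [← sufCat_step x y h2, ← pumpedWord_one_split x y l h1 (by omega)]
  have hAcc : (A.restrict S).AccRun (pumpedWord x y (fun _ => 1) l) (Pts ++ (Ly ++ Rts)) :=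
    ⟨r, hr, by rw [← hword]; exact hrun⟩
  have hst : stateAt A.init (Pts ++ (Ly ++ Rts)) (prefCat x y (i-1)).length = q := by
    rw [← hP.length_eq, stateAt_append]
    exact endOf_eq hP
  have hres := H3 i h1 h2 q ⟨Pts, hP⟩ hacc _ hAcc hst
  rw [List.length_append, ← hP.length_eq, ← hLy.length_eq, ← List.length_append,
    ← List.append_assoc, stateAt_append] at hres
  exact (endOf_eq (hP.append_run hLy)).symm.trans hres

lemma loop_ex (H3 : Hyp3 A S l x y) {i : ℕ} (h1 : 1 ≤ i) (h2 : i ≤ l) {q : Q}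
    (hPe : ∃ Pts, IsRun S A.init (prefCat x y (i-1)) Pts q)
    (hacc : (A.restrict S).AccFrom q (sufCat x y l i)) :
    (∃ L, IsRun S q (y i) L q) ∧ (A.restrict S).AccFrom q (x i ++ sufCat x y l (i+1)) := by
  obtain ⟨Pts, hP⟩ := hPe
  obtain ⟨r, hr, ts, hts⟩ := hacc
  rw [sufCat_step x y h2] at hts
  obtain ⟨Ly, rest, q'', rfl, hLy, hrest⟩ := hts.split_run
  have hacc2 : (A.restrict S).AccFrom q (sufCat x y l i) := by
    refine ⟨r, hr, Ly ++ rest, ?_⟩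
    rw [sufCat_step x y h2]
    exact hLy.append_run hrest
  have hacc'' : (A.restrict S).AccFrom q'' (x i ++ sufCat x y l (i+1)) := ⟨r, hr, rest, hrest⟩
  have heq := loop_close H3 h1 h2 hP hacc2 hLy hacc''
  subst heq
  exact ⟨⟨Ly, hLy⟩, hacc''⟩

lemma loop_uniq (hfa : A.FinitelyAmbiguous) (hS : S ⊆ A.trans) (H3 : Hyp3 A S l x y)
    {i : ℕ} (h1 : 1 ≤ i) (h2 : i ≤ l) {q : Q}
    (hPe : ∃ Pts, IsRun S A.init (prefCat x y (i-1)) Pts q)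
    (hacc : (A.restrict S).AccFrom q (sufCat x y l i))
    {L1 L2 : List (Q × σ × Q)}
    (hL1 : IsRun S q (y i) L1 q) (hL2 : IsRun S q (y i) L2 q) : L1 = L2 := by
  by_contra hne
  obtain ⟨k, hk0, hk⟩ := hfa
  obtain ⟨Pts, hP⟩ := hPe
  obtain ⟨r, hr, Tts, hT⟩ := (loop_ex H3 h1 h2 ⟨Pts, hP⟩ hacc).2
  set n := k + 1 with hn
  set Wn := prefCat x y (i-1) ++ (repWord n (y i) ++ (x i ++ sufCat x y l (i+1))) with hWn
  set f : ℕ → ℕ → List (Q × σ × Q) := fun m t => if t = m then L2 else L1 with hf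
  set g : ℕ → List (Q × σ × Q) := fun m => Pts ++ (chain (f m) 0 n ++ Tts) with hg
  have hloop : ∀ m t, IsRun S q (y i) (f m t) q := by
    intro m t
    by_cases h : t = m <;> simp [hf, h, hL1, hL2]
  have hmem : ∀ m, g m ∈ {ts | A.AccRun Wn ts} := by
    intro m
    refine ⟨r, hr, ?_⟩
    exact ((hP.append_run (((loops_chain_run n 0 (fun t _ _ => hloop m t))).append_run
      hT)).mono hS)
  have hlen : ∀ m t, (f m t).length = (y i).length := by
    intro m t
    by_cases h : t = m <;> simp [hf, h, hL1.length_eq, hL2.length_eq]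
  have hginj : ∀ m m', m < n → m' < n → g m = g m' → m = m' := by
    intro m m' hm hm' hgg
    by_contra hne'
    have h1' := List.append_cancel_left hgg
    have h2' := List.append_cancel_right h1'
    have := chain_inj n 0 h2' (fun t _ _ => (hlen m t).trans (hlen m' t).symm) m (by omega)
      (by omega)
    have hval : (if m = m then L2 else L1) = (if m = m' then L2 else L1) := this
    rw [if_pos rfl, if_neg (show ¬ m = m' from hne')] at hval
    exact hne hval.symm
  have hcard : (n : ℕ∞) ≤ {ts | A.AccRun Wn ts}.encard := by
    have himg : (fun m : Fin n => g m.val) '' Set.univ ⊆ {ts | A.AccRun Wn ts} := by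
      rintro _ ⟨m, _, rfl⟩
      exact hmem m.val
    have hinj : Set.InjOn (fun m : Fin n => g m.val) Set.univ := by
      intro a _ b _ hab
      exact Fin.ext (hginj a.val b.val a.isLt b.isLt hab)
    calc (n : ℕ∞) = ((fun m : Fin n => g m.val) '' Set.univ).encard := by
          rw [hinj.encard_image, Set.encard_univ]; simp
      _ ≤ _ := Set.encard_mono himg
  have := le_trans hcard (hk Wn)
  have : (n : ℕ) ≤ k := by exact_mod_cast this
  omega

end LoopLemmas

end NFA'

namespace NFA'

section MainDecomp

variable {σ Q : Type} {A : NFA' σ Q} {S : Finset (Q × σ × Q)}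
  {l : ℕ} {x y : ℕ → List σ}

/-- consequence of condition (4) -/
def Hyp4 (A : NFA' σ Q) (S : Finset (Q × σ × Q)) (l : ℕ) (x y : ℕ → List σ) : Prop :=
  ∀ i, 1 ≤ i → i ≤ l → ∀ q : Q,
    ((∃ Pts, IsRun S A.init (prefCat x y (i-1)) Pts q) ∧
      ¬ (A.restrict S).AccFrom q (sufCat x y l i)) ↔
    ((∃ Pts, IsRun S A.init (prefCat x y (i-1) ++ y i) Pts q) ∧
      ¬ (A.restrict S).AccFrom q (x i ++ sufCat x y l (i+1)))

lemma prefCat_succ' (x y : ℕ → List σ) {i : ℕ} (h1 : 1 ≤ i) :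
    prefCat x y i = prefCat x y (i-1) ++ (y i ++ x i) := by
  have := prefCat_succ x y (i-1)
  rw [show i - 1 + 1 = i by omega] at this
  exact this

lemma main_decomp (hfa : A.FinitelyAmbiguous) (hS : S ⊆ A.trans)
    (H3 : Hyp3 A S l x y) (HR : Hyp4 A S l x y) (j : ℕ → ℕ) :
    ∀ (d i : ℕ), 1 ≤ i → i + d = l + 1 → ∀ (q : Q) (V : List (Q × σ × Q)) (r : Q),
    (∃ Pts, IsRun S A.init (prefCat x y (i-1)) Pts q) → r ∈ A.accept →
    IsRun S q (pumpedSuf x y j l i) V r →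
    ∃ (qf : ℕ → Q) (T L : ℕ → List (Q × σ × Q)),
      qf i = q ∧ qf (l+1) = r ∧
      (∀ m, i ≤ m → m ≤ l →
        ((∃ Pts, IsRun S A.init (prefCat x y (m-1)) Pts (qf m)) ∧
          (A.restrict S).AccFrom (qf m) (sufCat x y l m)) ∧
        IsRun S (qf m) (y m) (L m) (qf m) ∧ IsRun S (qf m) (x m) (T m) (qf (m+1))) ∧
      V = chain (fun m => (List.replicate (j m) (L m)).flatten ++ T m) i (l + 1 - i) := by
  intro d
  induction d with
  | zero =>
    intro i h1 hd q V r hPe hr hV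
    have hieq : i = l + 1 := by omega
    subst hieq
    rw [pumpedSuf, show l + 1 - (l+1) = 0 by omega, chain_zero] at hV
    obtain ⟨hVnil, hqr⟩ := hV.nil_inv
    refine ⟨fun _ => q, fun _ => [], fun _ => [], rfl, hqr.symm ▸ rfl, ?_, ?_⟩
    · intro m hm1 hm2; omega
    · rw [show l + 1 - (l+1) = 0 by omega, chain_zero, hVnil]
  | succ d ihd =>
    intro i h1 hd q V r hPe hr hV
    have hil : i ≤ l := by omega
    rw [pumpedSuf_step x y j hil] at hV
    -- the trap lemma: states failing the (unpumped) suffix cannot accept the pumped suffix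
    have trap : ∀ m, ∀ (q' : Q) (V' : List (Q × σ × Q)) (r' : Q),
        (∃ Pts, IsRun S A.init (prefCat x y (i-1)) Pts q') →
        ¬ (A.restrict S).AccFrom q' (sufCat x y l i) → r' ∈ A.accept →
        IsRun S q' (repWord m (y i) ++ (x i ++ pumpedSuf x y j l (i+1))) V' r' → False := by
      intro m
      induction m with
      | zero =>
        intro q' V' r' hP' hnacc hr' hV'
        rw [repWord_zero, List.nil_append] at hV'
        obtain ⟨T', V'', q'', rfl, hT', hV''⟩ := hV'.split_run
        obtain ⟨hP'y, hnaccx⟩ := (HR i h1 hil q').mp ⟨hP', hnacc⟩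
        obtain ⟨Pts2, hPts2⟩ := hP'y
        have hPe'' : ∃ P, IsRun S A.init (prefCat x y ((i+1)-1)) P q'' := by
          refine ⟨Pts2 ++ T', ?_⟩
          rw [show (i+1)-1 = i by omega, prefCat_succ' x y h1, ← List.append_assoc]
          exact hPts2.append_run hT'
        obtain ⟨qf', T'', L'', hq1, hq2, hmid, hVeq''⟩ :=
          ihd (i+1) (by omega) (by omega) q'' V'' r' hPe'' hr' hV''
        have hbuild := build_run x y (fun _ => 1) l qf' T'' L'' d (i+1) (by omega)
          (fun m hm1 hm2 => ⟨(hmid m hm1 hm2).2.1, (hmid m hm1 hm2).2.2⟩)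
        rw [hq1, hq2, pumpedSuf_one] at hbuild
        exact hnaccx ⟨r', hr', T' ++ _, hT'.append_run hbuild⟩
      | succ m ihm =>
        intro q' V' r' hP' hnacc hr' hV'
        rw [repWord_succ, List.append_assoc] at hV'
        obtain ⟨Ly, rest, q'', rfl, hLy, hrest⟩ := hV'.split_run
        by_cases hc : (A.restrict S).AccFrom q'' (x i ++ sufCat x y l (i+1))
        · obtain ⟨r0, hr0, ts0, hts0⟩ := hc
          refine hnacc ⟨r0, hr0, Ly ++ ts0, ?_⟩
          rw [sufCat_step x y hil]
          exact hLy.append_run hts0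
        · obtain ⟨Pts', hPts'⟩ := hP'
          have hP'' : ∃ P, IsRun S A.init (prefCat x y (i-1) ++ y i) P q'' :=
            ⟨Pts' ++ Ly, hPts'.append_run hLy⟩
          obtain ⟨hP2, hnacc2⟩ := (HR i h1 hil q'').mpr ⟨hP'', hc⟩
          exact ihm q'' rest r' hP2 hnacc2 hr' hrest
    -- q accepts the unpumped suffix
    have haccq : (A.restrict S).AccFrom q (sufCat x y l i) := by
      by_contra hn
      exact trap (j i) q V r hPe hn hr hV
    obtain ⟨⟨Lq, hLq⟩, haccx⟩ := loop_ex H3 h1 hil hPe haccq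
    obtain ⟨Pts, hP⟩ := hPe
    -- every y_i-segment is the loop Lq
    have segq : ∀ m, ∀ (V' : List (Q × σ × Q)) (r' : Q), r' ∈ A.accept →
        IsRun S q (repWord m (y i) ++ (x i ++ pumpedSuf x y j l (i+1))) V' r' →
        ∃ W2, V' = (List.replicate m Lq).flatten ++ W2 ∧
          IsRun S q (x i ++ pumpedSuf x y j l (i+1)) W2 r' := by
      intro m
      induction m with
      | zero =>
        intro V' r' hr' hV'
        rw [repWord_zero, List.nil_append] at hV'
        exact ⟨V', by simp, hV'⟩
      | succ m ihm =>
        intro V' r' hr' hV'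
        rw [repWord_succ, List.append_assoc] at hV'
        obtain ⟨Ly, rest, q'', rfl, hLy, hrest⟩ := hV'.split_run
        have hq''q : q'' = q := by
          by_cases hc : (A.restrict S).AccFrom q'' (x i ++ sufCat x y l (i+1))
          · exact loop_close H3 h1 hil hP haccq hLy hc
          · exfalso
            have hP'' : ∃ P, IsRun S A.init (prefCat x y (i-1) ++ y i) P q'' :=
              ⟨Pts ++ Ly, hP.append_run hLy⟩
            obtain ⟨hP2, hnacc2⟩ := (HR i h1 hil q'').mpr ⟨hP'', hc⟩
            exact trap m q'' rest r' hP2 hnacc2 hr' hrest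
        subst hq''q
        have hLyLq : Ly = Lq := loop_uniq hfa hS H3 h1 hil ⟨Pts, hP⟩ haccq hLy hLq
        obtain ⟨W2, hW2eq, hW2run⟩ := ihm rest r' hr' hrest
        refine ⟨W2, ?_, hW2run⟩
        rw [List.replicate_succ, List.flatten_cons, List.append_assoc, ← hW2eq, hLyLq]
    obtain ⟨W2, hVeq, hW2⟩ := segq (j i) V r hr hV
    obtain ⟨T', V'', q', rfl, hT', hV''⟩ := hW2.split_run
    have hPe' : ∃ P, IsRun S A.init (prefCat x y ((i+1)-1)) P q' := by
      refine ⟨Pts ++ (Lq ++ T'), ?_⟩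
      rw [show (i+1)-1 = i by omega, prefCat_succ' x y h1]
      exact hP.append_run (hLq.append_run hT')
    obtain ⟨qf', T'', L'', hq1, hq2, hmid, hVeq''⟩ :=
      ihd (i+1) (by omega) (by omega) q' V'' r hPe' hr hV''
    refine ⟨fun m => if m ≤ i then q else qf' m,
      fun m => if m = i then T' else T'' m,
      fun m => if m = i then Lq else L'' m,
      if_pos le_rfl, ?_, ?_, ?_⟩
    · show (if l + 1 ≤ i then q else qf' (l+1)) = r
      rw [if_neg (by omega)]; exact hq2
    · intro m hm1 hm2
      beta_reduce
      rcases Nat.eq_or_lt_of_le hm1 with hmi | hmi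
      · subst hmi
        constructor
        · rw [if_pos le_rfl]
          exact ⟨⟨Pts, hP⟩, haccq⟩
        constructor
        · rw [if_pos le_rfl, if_pos rfl]
          exact hLq
        · rw [if_pos le_rfl, if_pos rfl, if_neg (by omega)]
          rw [hq1]
          exact hT'
      · have hne : ¬ (m ≤ i) := by omega
        have hne1 : ¬ (m + 1 ≤ i) := by omega
        have hnei : ¬ (m = i) := by omega
        rw [if_neg hne, if_neg hne1, if_neg hnei, if_neg hnei]
        exact hmid m (by omega) hm2
    · beta_reduce
      have hchain : chain (fun m => (List.replicate (j m)
            (if m = i then Lq else L'' m)).flatten ++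
            (if m = i then T' else T'' m)) (i+1) (l + 1 - (i+1))
          = chain (fun m => (List.replicate (j m) (L'' m)).flatten ++ T'' m)
            (i+1) (l + 1 - (i+1)) := by
        apply chain_congr
        intro m hm1 hm2
        rw [if_neg (by omega), if_neg (by omega)]
      rw [show l + 1 - i = (l + 1 - (i+1)) + 1 by omega, chain_succ, if_pos rfl, if_pos rfl,
        hchain, ← hVeq'', hVeq, List.append_assoc]

end MainDecomp

end NFA'

namespace NFA'

variable {σ Q : Type}

/-- replace each loop segment of a run on `x₀ y₁ x₁ ⋯ y_l x_l` by `j i` copies -/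
def expandRun (x y : ℕ → List σ) (j : ℕ → ℕ) (l : ℕ) (W : List (Q × σ × Q)) :
    List (Q × σ × Q) :=
  W.take (x 0).length ++ ((List.range l).map (fun t =>
    (List.replicate (j (t+1))
      ((W.drop (prefCat x y t).length).take (y (t+1)).length)).flatten ++
    ((W.drop (prefCat x y t ++ y (t+1)).length).take (x (t+1)).length))).flatten

section Struct

variable {A : NFA' σ Q} {S : Finset (Q × σ × Q)} {l : ℕ} {x y : ℕ → List σ}

lemma struct_run (hfa : A.FinitelyAmbiguous) (hS : S ⊆ A.trans)
    (H3 : Hyp3 A S l x y) (HR : Hyp4 A S l x y) (jj : ℕ → ℕ) {V : List (Q × σ × Q)}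
    (hV : (A.restrict S).AccRun (pumpedWord x y jj l) V) :
    ∃ (qf : ℕ → Q) (T L : ℕ → List (Q × σ × Q)),
      IsRun S A.init (x 0) (T 0) (qf 1) ∧ qf (l+1) ∈ A.accept ∧
      (∀ m, 1 ≤ m → m ≤ l →
        ((∃ Pts, IsRun S A.init (prefCat x y (m-1)) Pts (qf m)) ∧
          (A.restrict S).AccFrom (qf m) (sufCat x y l m)) ∧
        IsRun S (qf m) (y m) (L m) (qf m) ∧ IsRun S (qf m) (x m) (T m) (qf (m+1))) ∧
      V = T 0 ++ chain (fun m => (List.replicate (jj m) (L m)).flatten ++ T m) 1 l := by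
  obtain ⟨r, hr, hrun⟩ := hV
  rw [pumpedWord_eq_chain] at hrun
  obtain ⟨T0, V1, q1, rfl, hT0, hV1⟩ := hrun.split_run
  have hPe : ∃ P, IsRun S A.init (prefCat x y (1-1)) P q1 :=
    ⟨T0, by rw [show (1:ℕ)-1 = 0 by omega, prefCat_zero]; exact hT0⟩
  obtain ⟨qf', T', L', hq1, hq2, hmid, hVeq⟩ :=
    main_decomp hfa hS H3 HR jj l 1 le_rfl (by omega) q1 V1 r hPe hr hV1
  refine ⟨qf', fun m => if m = 0 then T0 else T' m, L', ?_, ?_, ?_, ?_⟩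
  · show IsRun S A.init (x 0) (if (0:ℕ) = 0 then T0 else T' 0) (qf' 1)
    rw [if_pos rfl, hq1]
    exact hT0
  · rw [hq2]; exact hr
  · intro m hm1 hm2
    beta_reduce
    rw [if_neg (show ¬ m = 0 by omega)]
    exact hmid m hm1 hm2
  · beta_reduce
    rw [if_pos rfl]
    congr 1
    rw [hVeq, show l + 1 - 1 = l by omega]
    apply chain_congr
    intro m hm1 hm2
    rw [if_neg (by omega)]

end Struct

lemma expand_eq {x y : ℕ → List σ} (j : ℕ → ℕ) {l : ℕ} {W T0 : List (Q × σ × Q)}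
    {T L : ℕ → List (Q × σ × Q)}
    (hW : W = T0 ++ chain (fun m => L m ++ T m) 1 l)
    (hT0 : T0.length = (x 0).length)
    (hT : ∀ m, 1 ≤ m → m ≤ l → (T m).length = (x m).length)
    (hL : ∀ m, 1 ≤ m → m ≤ l → (L m).length = (y m).length) :
    expandRun x y j l W
      = T0 ++ chain (fun m => (List.replicate (j m) (L m)).flatten ++ T m) 1 l := by
  have hdrop : ∀ t, t ≤ l →
      W.drop (prefCat x y t).length = chain (fun m => L m ++ T m) (t+1) (l - t) := by
    intro t
    induction t with
    | zero =>
      intro _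
      rw [prefCat_zero, hW, ← hT0, List.drop_left, Nat.sub_zero]
    | succ t iht =>
      intro htl
      rw [prefCat_succ x y t, List.length_append, ← List.drop_drop, iht (by omega),
        show l - t = (l - (t+1)) + 1 by omega, chain_succ,
        show ((y (t+1) ++ x (t+1)).length) = (L (t+1) ++ T (t+1)).length by
          simp [hL (t+1) (by omega) (by omega), hT (t+1) (by omega) (by omega)],
        List.drop_left]
  rw [expandRun]
  congr 1
  · rw [hW, ← hT0, List.take_left]
  · rw [chain]
    congr 1
    apply List.map_congr_left
    intro t ht
    rw [List.mem_range] at ht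
    have hdt := hdrop t (by omega)
    have hsliceY : (W.drop (prefCat x y t).length).take (y (t+1)).length = L (t+1) := by
      rw [hdt, show l - t = (l - (t+1)) + 1 by omega, chain_succ, List.append_assoc,
        ← hL (t+1) (by omega) (by omega), List.take_left]
    have hsliceX : (W.drop (prefCat x y t ++ y (t+1)).length).take (x (t+1)).length
        = T (t+1) := by
      rw [List.length_append, ← List.drop_drop, hdt,
        show l - t = (l - (t+1)) + 1 by omega, chain_succ, List.append_assoc,
        ← hL (t+1) (by omega) (by omega), List.drop_left,
        ← hT (t+1) (by omega) (by omega), List.take_left]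
    rw [hsliceY, hsliceX, Nat.add_comm 1 t]

end NFA'

namespace NFA'

lemma length_flatten_replicate {α : Type} (n : ℕ) (L : List α) :
    (List.replicate n L).flatten.length = n * L.length := by
  induction n with
  | zero => simp
  | succ n ih =>
    rw [List.replicate_succ, List.flatten_cons, List.length_append, ih, Nat.succ_mul,
      Nat.add_comm]

end NFA'
/-- Pumping each loop word `y_i` of a bad word any number of times preserves the
number of accepting runs. -/
theorem stmt15 {σ Q : Type} (A : NFA' σ Q) (hfa : A.FinitelyAmbiguous)
    (S : Finset (Q × σ × Q)) (hS : S ⊆ A.trans)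
    (l : ℕ) (x y : ℕ → List σ) (Qs Rs : ℕ → Set Q) (qs : ℕ → Q) (M : ℕ)
    (hdec : BadWordDecomp A S l x y Qs Rs qs)
    (hlM : l ≤ M)
    (hM : {ts | (A.restrict S).AccRun (pumpedWord x y (fun _ => 1) l) ts}.encard
      = (M : ℕ∞)) :
    ∀ j : ℕ → ℕ,
      {ts | (A.restrict S).AccRun (pumpedWord x y j l) ts}.encard = (M : ℕ∞) := by
  intro j
  obtain ⟨hy, hqQ, hQs, h2, h3, h4⟩ := hdec
  have H3 : Hyp3 A S l x y := by
    intro i h1 h2' q hPe hacc ts hts hst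
    have hqmem : q ∈ Qs i := by
      rw [hQs i h1 h2']
      exact ⟨hPe, hacc⟩
    exact (h3 i h1 h2' q hqmem ts hts hst).1
  have HR : Hyp4 A S l x y := by
    intro i h1 h2' q
    obtain ⟨h4a, h4b⟩ := h4 i h1 h2'
    constructor
    · rintro ⟨hre, hna⟩
      have hmem : q ∈ Rs i := by rw [h4a]; exact ⟨hre, hna⟩
      rw [h4b] at hmem
      exact hmem
    · rintro ⟨hre, hna⟩
      have hmem : q ∈ Rs i := by rw [h4b]; exact ⟨hre, hna⟩
      rw [h4a] at hmem
      exact hmem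
  have key : {ts | (A.restrict S).AccRun (pumpedWord x y j l) ts}
      = expandRun x y j l '' {ts | (A.restrict S).AccRun (pumpedWord x y (fun _ => 1) l) ts} := by
    ext V
    constructor
    · intro hV
      obtain ⟨qf, T, L, hT0, hacc, hmid, hVeq⟩ := struct_run hfa hS H3 HR j hV
      set W := T 0 ++ chain (fun m => L m ++ T m) 1 l with hWdef
      have hTlen : ∀ m, 1 ≤ m → m ≤ l → (T m).length = (x m).length :=
        fun m hm1 hm2 => ((hmid m hm1 hm2).2.2).length_eq
      have hLlen : ∀ m, 1 ≤ m → m ≤ l → (L m).length = (y m).length :=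
        fun m hm1 hm2 => ((hmid m hm1 hm2).2.1).length_eq
      have hWrun : (A.restrict S).AccRun (pumpedWord x y (fun _ => 1) l) W := by
        refine ⟨qf (l+1), hacc, ?_⟩
        rw [pumpedWord_eq_chain]
        have hb := build_run (Δ := S) x y (fun _ => 1) l qf T L l 1 (by omega)
          (fun m hm1 hm2 => ⟨(hmid m hm1 hm2).2.1, (hmid m hm1 hm2).2.2⟩)
        have hch : chain (fun m => (List.replicate 1 (L m)).flatten ++ T m) 1 (l+1-1)
            = chain (fun m => L m ++ T m) 1 l := by
          rw [show l + 1 - 1 = l by omega]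
          exact chain_congr (fun m _ _ => by simp)
        rw [hch] at hb
        exact hT0.append_run hb
      refine ⟨W, hWrun, ?_⟩
      rw [expand_eq j hWdef hT0.length_eq hTlen hLlen]
      exact hVeq.symm
    · rintro ⟨W, hW1, rfl⟩
      obtain ⟨qf, T, L, hT0, hacc, hmid, hWeq⟩ := struct_run hfa hS H3 HR (fun _ => 1) hW1
      have hTlen : ∀ m, 1 ≤ m → m ≤ l → (T m).length = (x m).length :=
        fun m hm1 hm2 => ((hmid m hm1 hm2).2.2).length_eq
      have hLlen : ∀ m, 1 ≤ m → m ≤ l → (L m).length = (y m).length :=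
        fun m hm1 hm2 => ((hmid m hm1 hm2).2.1).length_eq
      have hWeq' : W = T 0 ++ chain (fun m => L m ++ T m) 1 l := by
        rw [hWeq]
        congr 1
        exact chain_congr (fun m _ _ => by simp)
      rw [expand_eq j hWeq' hT0.length_eq hTlen hLlen]
      refine ⟨qf (l+1), hacc, ?_⟩
      rw [pumpedWord_eq_chain]
      have hb := build_run (Δ := S) x y j l qf T L l 1 (by omega)
        (fun m hm1 hm2 => ⟨(hmid m hm1 hm2).2.1, (hmid m hm1 hm2).2.2⟩)
      rw [show l + 1 - 1 = l by omega] at hb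
      exact hT0.append_run hb
  have hinj : Set.InjOn (expandRun x y j l)
      {ts | (A.restrict S).AccRun (pumpedWord x y (fun _ => 1) l) ts} := by
    intro W hW W' hW' heq
    obtain ⟨qf, T, L, hT0, hacc, hmid, hWeq⟩ := struct_run hfa hS H3 HR (fun _ => 1) hW
    obtain ⟨qf', T', L', hT0', hacc', hmid', hWeq2⟩ := struct_run hfa hS H3 HR (fun _ => 1) hW'
    have hTlen : ∀ m, 1 ≤ m → m ≤ l → (T m).length = (x m).length :=
      fun m hm1 hm2 => ((hmid m hm1 hm2).2.2).length_eq
    have hLlen : ∀ m, 1 ≤ m → m ≤ l → (L m).length = (y m).length :=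
      fun m hm1 hm2 => ((hmid m hm1 hm2).2.1).length_eq
    have hTlen' : ∀ m, 1 ≤ m → m ≤ l → (T' m).length = (x m).length :=
      fun m hm1 hm2 => ((hmid' m hm1 hm2).2.2).length_eq
    have hLlen' : ∀ m, 1 ≤ m → m ≤ l → (L' m).length = (y m).length :=
      fun m hm1 hm2 => ((hmid' m hm1 hm2).2.1).length_eq
    have hWc : W = T 0 ++ chain (fun m => L m ++ T m) 1 l := by
      rw [hWeq]; congr 1; exact chain_congr (fun m _ _ => by simp)
    have hWc' : W' = T' 0 ++ chain (fun m => L' m ++ T' m) 1 l := by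
      rw [hWeq2]; congr 1; exact chain_congr (fun m _ _ => by simp)
    rw [expand_eq j hWc hT0.length_eq hTlen hLlen,
      expand_eq j hWc' hT0'.length_eq hTlen' hLlen'] at heq
    have hT00 := List.append_inj heq (by rw [hT0.length_eq, hT0'.length_eq])
    have hblocks := chain_inj l 1 hT00.2 (by
      intro m hm1 hm2
      rw [List.length_append, List.length_append, length_flatten_replicate,
        length_flatten_replicate, hTlen m hm1 (by omega), hTlen' m hm1 (by omega),
        hLlen m hm1 (by omega), hLlen' m hm1 (by omega)])
    have hqT : ∀ m, 1 ≤ m → m ≤ l + 1 →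
        qf m = qf' m ∧ (m ≤ l → T m = T' m ∧ L m = L' m) := by
      intro m
      induction m with
      | zero => intro h; omega
      | succ m ihm =>
        intro h1 h2
        have hqm : qf (m+1) = qf' (m+1) := by
          rcases Nat.eq_zero_or_pos m with rfl | hm0
          · rw [← endOf_eq hT0, hT00.1, endOf_eq hT0']
          · have hprev := ihm (by omega) (by omega)
            have hTm := (hprev.2 (by omega)).1
            have h1m := (hmid m (by omega) (by omega)).2.2
            have h2m := (hmid' m (by omega) (by omega)).2.2
            rw [← hprev.1, ← hTm] at h2m
            exact h1m.end_unique h2m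
        refine ⟨hqm, ?_⟩
        intro hml
        have hg := hblocks (m+1) (by omega) (by omega)
        have hLm : L (m+1) = L' (m+1) := by
          have hc1 := hmid (m+1) (by omega) hml
          have hc2 := hmid' (m+1) (by omega) hml
          have hl2 := hc2.2.1
          rw [← hqm] at hl2
          exact loop_uniq hfa hS H3 (by omega) hml hc1.1.1 hc1.1.2 hc1.2.1 hl2
        have hTm : T (m+1) = T' (m+1) := by
          refine (List.append_inj hg ?_).2
          rw [length_flatten_replicate, length_flatten_replicate, hLm]
        exact ⟨hTm, hLm⟩
    rw [hWc, hWc', hT00.1]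
    congr 1
    apply chain_congr
    intro m hm1 hm2
    have hm := hqT m hm1 (by omega)
    rw [(hm.2 (by omega)).1, (hm.2 (by omega)).2]
  rw [key, hinj.encard_image]
  exact hM
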